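/- arXiv:2411.03802 — 3 statements merged into one kernel-verified Lean document; each statement's English description precedes it below -/
import Mathlib

section
/- Volume preservation for divergence-free flows: let X : ℝⁿ → ℝⁿ be a smooth vector field with Div(X)(x) = 0 for all x ∈ ℝⁿ, and let θ : ℝ × ℝⁿ → ℝⁿ be a smooth global flow of X. Then the orbit maps are volume preserving: for every Lebesgue-measurable set U ⊆ ℝⁿ and every t ∈ ℝ, vol(θ_t(U)) = vol(U), where vol is Lebesgue measure. -/
open MeasureTheory

section DetAux

variable {n : ℕ}

lemma abs_det_le_factorial_prod (M : Matrix (Fin n) (Fin n) ℝ) :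
    ‖M.det‖ ≤ (n.factorial : ℝ) * ∏ i, ‖M i‖ := by
  rw [Matrix.det_apply, Real.norm_eq_abs]
  calc |∑ σ : Equiv.Perm (Fin n), Equiv.Perm.sign σ • ∏ i, M (σ i) i|
      ≤ ∑ σ : Equiv.Perm (Fin n), |Equiv.Perm.sign σ • ∏ i, M (σ i) i| :=
        Finset.abs_sum_le_sum_abs _ _
    _ ≤ ∑ _σ : Equiv.Perm (Fin n), ∏ i, ‖M i‖ := by
        refine Finset.sum_le_sum fun σ _ => ?_
        have h1 : |Equiv.Perm.sign σ • ∏ i, M (σ i) i| = |∏ i, M (σ i) i| := by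
          rcases Int.units_eq_one_or (Equiv.Perm.sign σ) with h | h <;>
            simp [h, Units.smul_def, abs_neg]
        rw [h1, Finset.abs_prod]
        calc ∏ i, |M (σ i) i|
            ≤ ∏ i, ‖M (σ i)‖ :=
              Finset.prod_le_prod (fun i _ => abs_nonneg _)
                (fun i _ => by
                  simpa [Real.norm_eq_abs] using norm_le_pi_norm (M (σ i)) i)
          _ = ∏ i, ‖M i‖ := Equiv.prod_comp σ fun i => ‖M i‖
    _ = (n.factorial : ℝ) * ∏ i, ‖M i‖ := by
        rw [Finset.sum_const, Finset.card_univ, Fintype.card_perm, nsmul_eq_mul, Fintype.card_fin]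

/-- The determinant, as a continuous multilinear map in the rows. -/
noncomputable def detCM (n : ℕ) :
    ContinuousMultilinearMap ℝ (fun _ : Fin n => (Fin n → ℝ)) ℝ :=
  MultilinearMap.mkContinuous
    (Matrix.detRowAlternating :
      (Fin n → ℝ) [⋀^Fin n]→ₗ[ℝ] ℝ).toMultilinearMap
    (n.factorial) (fun M => abs_det_le_factorial_prod (Matrix.of M))

lemma detCM_apply (M : Matrix (Fin n) (Fin n) ℝ) : detCM n M = M.det := rfl

/-- Jacobi-type formula: derivative of the determinant of a matrix-valued function,
expressed through row updates. -/
lemma hasDerivAt_det {M : ℝ → Matrix (Fin n) (Fin n) ℝ} {M' : Fin n → Fin n → ℝ} {t : ℝ}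
    (h : ∀ i, HasDerivAt (fun s => M s i) (M' i) t) :
    HasDerivAt (fun s => (M s).det) (∑ i, ((M t).updateRow i (M' i)).det) t := by
  classical
  have h1 : HasDerivAt (fun s => (fun i => M s i)) (fun i => M' i) t := hasDerivAt_pi.2 h
  have h2 := ((detCM n).hasFDerivAt (fun i => M t i)).comp_hasDerivAt t h1
  have h3 : ((detCM n).linearDeriv (fun i => M t i)) (fun i => M' i)
      = ∑ i, ((M t).updateRow i (M' i)).det := by
    rw [ContinuousMultilinearMap.linearDeriv_apply]
    rfl
  rw [h3] at h2
  exact h2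

/-- Replacing each row of `M` by the corresponding row of `C * M` and summing determinants
yields `trace C * det M`. -/
lemma sum_det_updateRow_mul (C M : Matrix (Fin n) (Fin n) ℝ) :
    ∑ i, (M.updateRow i ((C * M) i)).det = C.trace * M.det := by
  have hrow : ∀ i, (C * M) i = ∑ k, C i k • M k := by
    intro i
    ext j
    simp [Matrix.mul_apply, Finset.sum_apply]
  calc ∑ i, (M.updateRow i ((C * M) i)).det
      = ∑ i, C i i • M.det := by
        refine Finset.sum_congr rfl fun i _ => ?_
        rw [hrow i, Matrix.det_updateRow_sum]
    _ = C.trace * M.det := by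
        simp [Matrix.trace, Matrix.diag, Finset.sum_mul, smul_eq_mul]

end DetAux

/-- Volume preservation for divergence-free flows: if `θ` is a smooth global flow of a
smooth divergence-free vector field `X` on `ℝⁿ`, then every orbit map `θ_t` preserves
Lebesgue measure: `vol(θ_t(U)) = vol(U)` for every measurable `U` and every `t`. -/
theorem volume_preserving_of_div_free (n : ℕ) (X : (Fin n → ℝ) → (Fin n → ℝ))
    (hX : ContDiff ℝ (⊤ : ℕ∞) X)
    (hdiv : ∀ x : Fin n → ℝ,
      ∑ i : Fin n, fderiv ℝ (fun y => X y i) x (Pi.single i 1) = 0)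
    (θ : ℝ → (Fin n → ℝ) → (Fin n → ℝ))
    (hθ : ContDiff ℝ (⊤ : ℕ∞) (fun p : ℝ × (Fin n → ℝ) => θ p.1 p.2))
    (h0 : ∀ x, θ 0 x = x)
    (hadd : ∀ t s : ℝ, ∀ x, θ (t + s) x = θ t (θ s x))
    (hflow : ∀ t : ℝ, ∀ x, HasDerivAt (fun s => θ s x) (X (θ t x)) t) :
    ∀ U : Set (Fin n → ℝ), MeasurableSet U → ∀ t : ℝ,
      volume (θ t '' U) = volume U := by
  classical
  set F : ℝ × (Fin n → ℝ) → (Fin n → ℝ) := fun p => θ p.1 p.2 with hFdef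
  set f' : ℝ × (Fin n → ℝ) → (ℝ × (Fin n → ℝ)) →L[ℝ] (Fin n → ℝ) := fderiv ℝ F with hf'def
  have hFd : ∀ p, HasFDerivAt F (f' p) p := fun p =>
    ((hθ.differentiable (by simp)) p).hasFDerivAt
  have hf'c : ContDiff ℝ (⊤ : ℕ∞) f' := hθ.fderiv_right (by simp)
  have hXd : ∀ y, HasFDerivAt X (fderiv ℝ X y) y := fun y =>
    ((hX.differentiable (by simp)) y).hasFDerivAt
  -- derivative of `θ s` in the space variable
  have hfder : ∀ (s : ℝ) (x : Fin n → ℝ), HasFDerivAt (θ s)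
      ((f' (s, x)).comp (ContinuousLinearMap.inr ℝ ℝ (Fin n → ℝ))) x := by
    intro s x
    have h2 : HasFDerivAt (fun y : Fin n → ℝ => ((s, y) : ℝ × (Fin n → ℝ)))
        (ContinuousLinearMap.inr ℝ ℝ (Fin n → ℝ)) x := hasFDerivAt_prodMk_right s x
    exact (hFd (s, x)).comp x h2
  have hfderiv_eq : ∀ (s : ℝ) (x : Fin n → ℝ),
      fderiv ℝ (θ s) x = (f' (s, x)).comp (ContinuousLinearMap.inr ℝ ℝ (Fin n → ℝ)) :=
    fun s x => (hfder s x).fderiv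
  -- the time derivative of the flow is X along the flow, via fderiv of F
  have htime : ∀ p : ℝ × (Fin n → ℝ), f' p (1, 0) = X (F p) := by
    rintro ⟨a, b⟩
    have hcurve : HasDerivAt (fun s : ℝ => ((s, b) : ℝ × (Fin n → ℝ))) (1, 0) a :=
      (hasDerivAt_id a).prodMk (hasDerivAt_const a b)
    have hc : HasDerivAt (fun s => θ s b) (f' (a, b) (1, 0)) a :=
      by have hc0 := (hFd (a, b)).comp_hasDerivAt a hcurve; exact hc0
    exact hc.unique (hflow a b)
  -- variational equation
  have hA : ∀ (x : Fin n → ℝ) (t : ℝ),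
      HasDerivAt (fun s => fderiv ℝ (θ s) x)
        ((fderiv ℝ X (θ t x)).comp (fderiv ℝ (θ t) x)) t := by
    intro x t
    set p : ℝ × (Fin n → ℝ) := (t, x) with hp
    have hf'' : HasFDerivAt f' (fderiv ℝ f' p) p :=
      ((hf'c.differentiable (by simp)) p).hasFDerivAt
    have hcurve : HasDerivAt (fun s : ℝ => ((s, x) : ℝ × (Fin n → ℝ))) (1, 0) t :=
      (hasDerivAt_id t).prodMk (hasDerivAt_const t x)
    have h1 : HasDerivAt (fun s => f' (s, x)) (fderiv ℝ f' p (1, 0)) t :=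
      hf''.comp_hasDerivAt t hcurve
    set P : ((ℝ × (Fin n → ℝ)) →L[ℝ] (Fin n → ℝ)) →L[ℝ] ((Fin n → ℝ) →L[ℝ] (Fin n → ℝ)) :=
      (ContinuousLinearMap.compL ℝ (Fin n → ℝ) (ℝ × (Fin n → ℝ)) (Fin n → ℝ)).flip
        (ContinuousLinearMap.inr ℝ ℝ (Fin n → ℝ)) with hPdef
    have h2 : HasDerivAt (fun s => P (f' (s, x))) (P (fderiv ℝ f' p (1, 0))) t :=
      P.hasFDerivAt.comp_hasDerivAt t h1
    have h3 : HasDerivAt (fun s => fderiv ℝ (θ s) x) (P (fderiv ℝ f' p (1, 0))) t := by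
      refine h2.congr_of_eventuallyEq (Filter.Eventually.of_forall fun s => ?_)
      show fderiv ℝ (θ s) x = P (f' (s, x))
      rw [hfderiv_eq s x]
      rfl
    have hsymm : ∀ v : Fin n → ℝ,
        fderiv ℝ f' p (1, 0) (0, v) = fderiv ℝ f' p (0, v) (1, 0) := fun v =>
      second_derivative_symmetric hFd hf'' (1, 0) (0, v)
    -- compute the mixed second derivative via X
    set e : ((ℝ × (Fin n → ℝ)) →L[ℝ] (Fin n → ℝ)) →L[ℝ] (Fin n → ℝ) :=
      ContinuousLinearMap.apply ℝ (Fin n → ℝ) ((1 : ℝ), (0 : Fin n → ℝ)) with hedef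
    have hG1 : HasFDerivAt (fun q => f' q ((1 : ℝ), (0 : Fin n → ℝ)))
        (e.comp (fderiv ℝ f' p)) p := e.hasFDerivAt.comp p hf''
    have hG1' : HasFDerivAt (fun q => X (F q)) (e.comp (fderiv ℝ f' p)) p := by
      refine hG1.congr_of_eventuallyEq (Filter.Eventually.of_forall fun q => ?_)
      show X (F q) = f' q (1, 0)
      exact (htime q).symm
    have hG3 : HasFDerivAt (fun q => X (F q)) ((fderiv ℝ X (F p)).comp (f' p)) p :=
      (hXd (F p)).comp p (hFd p)
    have heq : e.comp (fderiv ℝ f' p) = (fderiv ℝ X (F p)).comp (f' p) :=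
      hG1'.unique hG3
    have hfinal : P (fderiv ℝ f' p (1, 0)) =
        (fderiv ℝ X (θ t x)).comp (fderiv ℝ (θ t) x) := by
      ext v
      have e1 : P (fderiv ℝ f' p (1, 0)) v = fderiv ℝ f' p (1, 0) (0, v) := rfl
      have e2 : fderiv ℝ f' p (0, v) (1, 0) = e (fderiv ℝ f' p (0, v)) := rfl
      have e3 : e (fderiv ℝ f' p (0, v)) = (e.comp (fderiv ℝ f' p)) (0, v) := rfl
      have e4 : ((fderiv ℝ X (F p)).comp (f' p)) (0, v)
          = fderiv ℝ X (θ t x) (fderiv ℝ (θ t) x v) := by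
        rw [hfderiv_eq t x]
        rfl
      rw [ContinuousLinearMap.comp_apply, e1, hsymm v, e2, e3, heq, e4]
    rw [← hfinal]
    exact h3
  -- the Jacobian matrix of the flow, and its determinant
  have key : ∀ (t : ℝ) (x : Fin n → ℝ),
      (LinearMap.toMatrix' ((fderiv ℝ (θ t) x :
        (Fin n → ℝ) →L[ℝ] (Fin n → ℝ)) : (Fin n → ℝ) →ₗ[ℝ] (Fin n → ℝ))).det = 1 := by
    intro t x
    set N : ℝ → Matrix (Fin n) (Fin n) ℝ := fun s =>
      LinearMap.toMatrix' ((fderiv ℝ (θ s) x :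
        (Fin n → ℝ) →L[ℝ] (Fin n → ℝ)) : (Fin n → ℝ) →ₗ[ℝ] (Fin n → ℝ)) with hNdef
    -- the row extraction continuous linear map
    set R : Fin n → (((Fin n → ℝ) →L[ℝ] (Fin n → ℝ)) →L[ℝ] (Fin n → ℝ)) := fun i =>
      ContinuousLinearMap.pi fun j =>
        (ContinuousLinearMap.proj i).comp
          (ContinuousLinearMap.apply ℝ (Fin n → ℝ) (Pi.single j 1)) with hRdef
    have hrow : ∀ (i : Fin n) (f : (Fin n → ℝ) →L[ℝ] (Fin n → ℝ)),
        R i f = LinearMap.toMatrix' (f : (Fin n → ℝ) →ₗ[ℝ] (Fin n → ℝ)) i := by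
      intro i f
      funext j
      rw [LinearMap.toMatrix'_apply]
      have : (fun j' => if j' = j then (1 : ℝ) else 0) = Pi.single j 1 := by
        funext j'
        simp [Pi.single_apply]
      rfl
    -- the derivative of the determinant along the flow is zero
    have hg : ∀ u : ℝ, HasDerivAt (fun s => (N s).det) 0 u := by
      intro u
      have hrowd : ∀ i : Fin n, HasDerivAt (fun s => N s i)
          (R i ((fderiv ℝ X (θ u x)).comp (fderiv ℝ (θ u) x))) u := by
        intro i
        have := (R i).hasFDerivAt.comp_hasDerivAt u (hA x u)
        refine this.congr_of_eventuallyEq (Filter.Eventually.of_forall fun s => ?_)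
        show N s i = R i (fderiv ℝ (θ s) x)
        exact (hrow i _).symm
      have hJ := hasDerivAt_det (M := N)
        (M' := fun i => R i ((fderiv ℝ X (θ u x)).comp (fderiv ℝ (θ u) x))) hrowd
      have hmul : ∀ i : Fin n, R i ((fderiv ℝ X (θ u x)).comp (fderiv ℝ (θ u) x))
          = ((LinearMap.toMatrix' ((fderiv ℝ X (θ u x) :
              (Fin n → ℝ) →L[ℝ] (Fin n → ℝ)) : (Fin n → ℝ) →ₗ[ℝ] (Fin n → ℝ))) * N u) i := by
        intro i
        rw [hrow i]
        have : (((fderiv ℝ X (θ u x)).comp (fderiv ℝ (θ u) x) :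
            (Fin n → ℝ) →L[ℝ] (Fin n → ℝ)) : (Fin n → ℝ) →ₗ[ℝ] (Fin n → ℝ))
            = ((fderiv ℝ X (θ u x) : (Fin n → ℝ) →L[ℝ] (Fin n → ℝ)) :
                (Fin n → ℝ) →ₗ[ℝ] (Fin n → ℝ)).comp
              ((fderiv ℝ (θ u) x : (Fin n → ℝ) →L[ℝ] (Fin n → ℝ)) :
                (Fin n → ℝ) →ₗ[ℝ] (Fin n → ℝ)) := rfl
      -- toMatrix' of a composition is a product
        rw [this, LinearMap.toMatrix'_comp]
      -- trace of the matrix of DX is the divergence, which vanishes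
      have htrace : (LinearMap.toMatrix' ((fderiv ℝ X (θ u x) :
          (Fin n → ℝ) →L[ℝ] (Fin n → ℝ)) : (Fin n → ℝ) →ₗ[ℝ] (Fin n → ℝ))).trace = 0 := by
        have hcomp : ∀ (i : Fin n) (v : Fin n → ℝ),
            fderiv ℝ (fun z => X z i) (θ u x) v = fderiv ℝ X (θ u x) v i := by
          intro i v
          have h := (ContinuousLinearMap.proj (R := ℝ) (φ := fun _ : Fin n => ℝ) i
            ).hasFDerivAt.comp (θ u x) (hXd (θ u x))
          have h2 : HasFDerivAt (fun z => X z i)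
              ((ContinuousLinearMap.proj (R := ℝ) (φ := fun _ : Fin n => ℝ) i).comp
                (fderiv ℝ X (θ u x))) (θ u x) := h
          rw [h2.fderiv]
          rfl
        rw [Matrix.trace]
        have hdiag : ∀ i : Fin n,
            (LinearMap.toMatrix' ((fderiv ℝ X (θ u x) :
              (Fin n → ℝ) →L[ℝ] (Fin n → ℝ)) : (Fin n → ℝ) →ₗ[ℝ] (Fin n → ℝ))).diag i
            = fderiv ℝ (fun z => X z i) (θ u x) (Pi.single i 1) := by
          intro i
          rw [hcomp i]
          rw [Matrix.diag]
          rw [LinearMap.toMatrix'_apply]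
          have : (fun j' => if j' = i then (1 : ℝ) else 0) = Pi.single i 1 := by
            funext j'
            simp [Pi.single_apply]
          rfl
        rw [Finset.sum_congr rfl fun i _ => hdiag i]
        exact hdiv (θ u x)
      have hz : (∑ i, ((N u).updateRow i
          (R i ((fderiv ℝ X (θ u x)).comp (fderiv ℝ (θ u) x)))).det) = 0 := by
        rw [Finset.sum_congr rfl fun i _ => by rw [hmul i]]
        rw [sum_det_updateRow_mul, htrace, zero_mul]
      rw [hz] at hJ
      exact hJ
    -- hence the determinant is constant, equal to its value at time 0
    have hconst : (N t).det = (N 0).det :=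
      is_const_of_deriv_eq_zero
        (fun u => (hg u).differentiableAt) (fun u => (hg u).deriv) t 0
    have hzero : (N 0).det = 1 := by
      have hid : θ 0 = fun y => y := funext h0
      have : N 0 = 1 := by
        rw [hNdef]
        simp only [hid]
        rw [fderiv_id']
        rw [show ((ContinuousLinearMap.id ℝ (Fin n → ℝ) :
          (Fin n → ℝ) →L[ℝ] (Fin n → ℝ)) : (Fin n → ℝ) →ₗ[ℝ] (Fin n → ℝ))
          = LinearMap.id from rfl]
        exact LinearMap.toMatrix'_id
      rw [this, Matrix.det_one]
    rw [hconst, hzero]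
  -- determinant of the continuous linear map
  have keyCLM : ∀ (t : ℝ) (x : Fin n → ℝ), (fderiv ℝ (θ t) x).det = 1 := by
    intro t x
    have := key t x
    rwa [LinearMap.det_toMatrix'] at this
  -- conclusion via the change of variables formula
  intro U hU t
  have hdiffθ : Differentiable ℝ (θ t) := fun x => (hfder t x).differentiableAt
  have hf' : ∀ x ∈ U, HasFDerivWithinAt (θ t) (fderiv ℝ (θ t) x) U x :=
    fun x _ => (hdiffθ x).hasFDerivAt.hasFDerivWithinAt
  have hinj : Set.InjOn (θ t) U := by
    intro a _ b _ hab
    have h := congrArg (θ (-t)) hab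
    rwa [← hadd, ← hadd, neg_add_cancel, h0, h0] at h
  rw [← lintegral_abs_det_fderiv_eq_addHaar_image volume hU hf' hinj]
  have hone : ∀ x : Fin n → ℝ,
      ENNReal.ofReal |(fderiv ℝ (θ t) x).det| = 1 := by
    intro x
    rw [keyCLM t x]
    norm_num
  simp only [hone]
  exact setLIntegral_one U
end

section
/- Under the bounded-orbit assumption, the orbit maps of a divergence-free field preserve Lebesgue measure on the invariant set: let X : ℝⁿ → ℝⁿ be a smooth vector field with Div(X) = 0 everywhere, θ a smooth global flow of X, and Ω ⊆ ℝⁿ a compact set with θ(t, x) ∈ Ω for all x ∈ Ω and t ≥ 0. Then for every Lebesgue-measurable U ⊆ Ω and every t ≥ 0, the image θ_t(U) is contained in Ω and vol(θ_t(U)) = vol(U). -/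
open MeasureTheory

namespace LiouvilleAux

/-- The determinant as a multilinear map in the rows. -/
noncomputable def detMl (n : ℕ) : MultilinearMap ℝ (fun _ : Fin n => (Fin n → ℝ)) ℝ :=
  (Matrix.detRowAlternating : (Fin n → ℝ) [⋀^Fin n]→ₗ[ℝ] ℝ).toMultilinearMap

lemma detMl_apply (n : ℕ) (m : Fin n → (Fin n → ℝ)) :
    detMl n m = (Matrix.of m).det := rfl

lemma detMl_bound (n : ℕ) (m : Fin n → (Fin n → ℝ)) :
    ‖detMl n m‖ ≤ (n.factorial : ℝ) * ∏ i, ‖m i‖ := by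
  rw [detMl_apply, Matrix.det_apply']
  calc ‖∑ σ : Equiv.Perm (Fin n), Equiv.Perm.sign σ * ∏ i, Matrix.of m (σ i) i‖
      ≤ ∑ σ : Equiv.Perm (Fin n), ‖(Equiv.Perm.sign σ : ℝ) * ∏ i, Matrix.of m (σ i) i‖ :=
        norm_sum_le _ _
    _ ≤ ∑ _σ : Equiv.Perm (Fin n), ∏ i, ‖m i‖ := by
        refine Finset.sum_le_sum fun σ _ => ?_
        rw [norm_mul]
        have h1 : ‖((Equiv.Perm.sign σ : ℤ) : ℝ)‖ = 1 := by
          rcases Int.units_eq_one_or (Equiv.Perm.sign σ) with h | h <;> rw [h] <;> norm_num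
        rw [h1, one_mul]
        have h2 : ‖∏ i, Matrix.of m (σ i) i‖ ≤ ∏ i, ‖m (σ i)‖ := by
          rw [norm_prod]
          refine Finset.prod_le_prod (fun i _ => norm_nonneg _) fun i _ => ?_
          exact norm_le_pi_norm (m (σ i)) i
        refine h2.trans_eq ?_
        exact Equiv.prod_comp σ fun i => ‖m i‖
    _ = (n.factorial : ℝ) * ∏ i, ‖m i‖ := by
        rw [Finset.sum_const, Finset.card_univ, Fintype.card_perm, Fintype.card_fin,
          nsmul_eq_mul]

/-- The determinant as a continuous multilinear map in the rows. -/
noncomputable def detCml (n : ℕ) :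
    ContinuousMultilinearMap ℝ (fun _ : Fin n => (Fin n → ℝ)) ℝ :=
  (detMl n).mkContinuous n.factorial (detMl_bound n)

lemma detCml_apply (n : ℕ) (m : Fin n → (Fin n → ℝ)) :
    detCml n m = (Matrix.of m).det := by
  rw [← detMl_apply]
  exact congrFun (MultilinearMap.coe_mkContinuous _ _ _) m

/-- The rows of (the matrix of) a continuous linear map. -/
noncomputable def rowCLM (n : ℕ) (i : Fin n) :
    ((Fin n → ℝ) →L[ℝ] (Fin n → ℝ)) →L[ℝ] (Fin n → ℝ) :=
  ContinuousLinearMap.pi fun j =>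
    (ContinuousLinearMap.proj i).comp (ContinuousLinearMap.apply ℝ (Fin n → ℝ) (Pi.single j 1))

lemma rowCLM_apply (n : ℕ) (i : Fin n) (C : (Fin n → ℝ) →L[ℝ] (Fin n → ℝ)) (j : Fin n) :
    rowCLM n i C j = C (Pi.single j 1) i := rfl

lemma det_eq_detCml (n : ℕ) (C : (Fin n → ℝ) →L[ℝ] (Fin n → ℝ)) :
    C.det = detCml n (fun i => rowCLM n i C) := by
  rw [detCml_apply]
  have h : C.det = (LinearMap.toMatrix' (C : (Fin n → ℝ) →ₗ[ℝ] (Fin n → ℝ))).det :=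
    (LinearMap.det_toMatrix' _).symm
  rw [h]
  congr 1
lemma detCml_eq_alt (n : ℕ) (m : Fin n → (Fin n → ℝ)) :
    detCml n m = Matrix.detRowAlternating m := detCml_apply n m

lemma detCml_update (n : ℕ) (m : Fin n → (Fin n → ℝ)) (i : Fin n) (y : Fin n → ℝ) :
    detCml n (Function.update m i y) = (detCml n).toContinuousLinearMap m i y := by
  simp [ContinuousMultilinearMap.toContinuousLinearMap_apply]

lemma sum_det_update (n : ℕ) (B C : (Fin n → ℝ) →L[ℝ] (Fin n → ℝ)) :
    ∑ i, detCml n (Function.update (fun j => rowCLM n j C) i (rowCLM n i (B.comp C)))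
      = (∑ i, B (Pi.single i 1) i) * detCml n (fun j => rowCLM n j C) := by
  have hv : ∀ i, rowCLM n i (B.comp C) = ∑ k, B (Pi.single k 1) i • rowCLM n k C := by
    intro i
    funext j
    rw [Finset.sum_apply]
    simp only [Pi.smul_apply, rowCLM_apply, ContinuousLinearMap.comp_apply, smul_eq_mul]
    conv_lhs => rw [pi_eq_sum_univ (C (Pi.single j 1))]
    rw [map_sum, Finset.sum_apply]
    refine Finset.sum_congr rfl fun k _ => ?_
    have hs : (fun j' => if k = j' then (1:ℝ) else 0) = Pi.single k 1 := by
      funext j'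
      simp [Pi.single_apply, eq_comm]
    rw [hs, B.map_smul]
    simp [mul_comm]
  have hzero : ∀ i k : Fin n, k ≠ i →
      detCml n (Function.update (fun j => rowCLM n j C) i (rowCLM n k C)) = 0 := by
    intro i k hk
    rw [detCml_eq_alt]
    refine (Matrix.detRowAlternating (R := ℝ) (n := Fin n)).map_eq_zero_of_eq _
      (i := i) (j := k) ?_ (Ne.symm hk)
    rw [Function.update_self, Function.update_of_ne hk]
  calc ∑ i, detCml n (Function.update (fun j => rowCLM n j C) i (rowCLM n i (B.comp C)))
      = ∑ i, ∑ k, B (Pi.single k 1) i •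
          detCml n (Function.update (fun j => rowCLM n j C) i (rowCLM n k C)) := by
        refine Finset.sum_congr rfl fun i _ => ?_
        rw [hv i, detCml_update, map_sum]
        refine Finset.sum_congr rfl fun k _ => ?_
        rw [ContinuousLinearMap.map_smul, detCml_update]
    _ = ∑ i, B (Pi.single i 1) i • detCml n (fun j => rowCLM n j C) := by
        refine Finset.sum_congr rfl fun i _ => ?_
        rw [Finset.sum_eq_single i]
        · rw [Function.update_eq_self]
        · intro k _ hk
          rw [hzero i k hk, smul_zero]
        · intro h
          exact absurd (Finset.mem_univ i) h
    _ = (∑ i, B (Pi.single i 1) i) * detCml n (fun j => rowCLM n j C) := by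
        rw [← Finset.sum_smul, smul_eq_mul]
lemma exists_fderiv_det_one (n : ℕ) (X : (Fin n → ℝ) → (Fin n → ℝ))
    (hX : ContDiff ℝ (⊤ : ℕ∞) X)
    (hdiv : ∀ x : Fin n → ℝ,
      ∑ i : Fin n, fderiv ℝ (fun y => X y i) x (Pi.single i 1) = 0)
    (θ : ℝ → (Fin n → ℝ) → (Fin n → ℝ))
    (hθ : ContDiff ℝ (⊤ : ℕ∞) (fun p : ℝ × (Fin n → ℝ) => θ p.1 p.2))
    (h0 : ∀ x, θ 0 x = x)
    (hflow : ∀ t : ℝ, ∀ x, HasDerivAt (fun s => θ s x) (X (θ t x)) t) :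
    ∀ (t : ℝ) (x : Fin n → ℝ), ∃ D : (Fin n → ℝ) →L[ℝ] (Fin n → ℝ),
      HasFDerivAt (θ t) D x ∧ D.det = 1 := by
  have hXd : Differentiable ℝ X := hX.differentiable (by simp)
  set g : ℝ × (Fin n → ℝ) → (Fin n → ℝ) := fun p => θ p.1 p.2 with hg_def
  have hgd : Differentiable ℝ g := hθ.differentiable (by simp)
  set K : ℝ × (Fin n → ℝ) → (ℝ × (Fin n → ℝ)) →L[ℝ] (Fin n → ℝ) := fderiv ℝ g with hK_def
  have hKc : ContDiff ℝ (⊤ : ℕ∞) K := hθ.fderiv_right (by simp)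
  have hKd : Differentiable ℝ K := hKc.differentiable (by simp)
  set inr : (Fin n → ℝ) →L[ℝ] ℝ × (Fin n → ℝ) :=
    ContinuousLinearMap.inr ℝ ℝ (Fin n → ℝ) with hinr_def
  have hDθ : ∀ (s : ℝ) (y : Fin n → ℝ), HasFDerivAt (θ s) ((K (s, y)).comp inr) y := by
    intro s y
    have h1 : HasFDerivAt g (K (s, y)) (s, y) := (hgd (s, y)).hasFDerivAt
    have h2 : HasFDerivAt (fun z : Fin n → ℝ => ((s, z) : ℝ × (Fin n → ℝ))) inr y :=
      hasFDerivAt_prodMk_right s y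
    exact h1.comp y h2
  have hK1 : ∀ p : ℝ × (Fin n → ℝ), K p (1, 0) = X (θ p.1 p.2) := by
    rintro ⟨s, y⟩
    have h2 : HasDerivAt (fun u : ℝ => ((u, y) : ℝ × (Fin n → ℝ))) (1, 0) s :=
      HasDerivAt.prodMk (hasDerivAt_id s) (hasDerivAt_const s y)
    have h3 : HasDerivAt (fun u : ℝ => g (u, y)) (K (s, y) (1, 0)) s := by
      have h3' := (hgd (s, y)).hasFDerivAt.comp_hasDerivAt s h2
      exact h3'
    exact h3.unique (hflow s y)
  intro t x
  set A : ℝ → (Fin n → ℝ) →L[ℝ] (Fin n → ℝ) := fun s => (K (s, x)).comp inr with hA_def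
  have hA : ∀ s : ℝ, HasDerivAt A ((fderiv ℝ X (θ s x)).comp (A s)) s := by
    intro s
    have hKs : HasFDerivAt K (fderiv ℝ K (s, x)) (s, x) := (hKd (s, x)).hasFDerivAt
    have hcurve : HasDerivAt (fun u : ℝ => ((u, x) : ℝ × (Fin n → ℝ))) (1, 0) s :=
      HasDerivAt.prodMk (hasDerivAt_id s) (hasDerivAt_const s x)
    have h1 : HasDerivAt (fun u : ℝ => K (u, x)) (fderiv ℝ K (s, x) (1, 0)) s :=
      hKs.comp_hasDerivAt s hcurve
    have h2 : HasDerivAt A ((fderiv ℝ K (s, x) (1, 0)).comp inr) s := by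
      have := h1.clm_comp (hasDerivAt_const s inr)
      simpa using this
    convert h2 using 1
    refine ContinuousLinearMap.ext fun v => ?_
    have hsymm := second_derivative_symmetric (𝕜 := ℝ) (f := g) (f' := K)
      (f'' := fderiv ℝ K (s, x)) (fun y => (hgd y).hasFDerivAt) hKs ((0 : ℝ), v) ((1 : ℝ), 0)
    have hh : HasFDerivAt (fun y : Fin n → ℝ => K (s, y)) ((fderiv ℝ K (s, x)).comp inr) x :=
      hKs.comp x (hasFDerivAt_prodMk_right s x)
    have hev : HasFDerivAt (fun y : Fin n → ℝ => K (s, y) ((1 : ℝ), (0 : Fin n → ℝ)))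
        ((ContinuousLinearMap.apply ℝ (Fin n → ℝ) ((1 : ℝ), (0 : Fin n → ℝ))).comp
          ((fderiv ℝ K (s, x)).comp inr)) x :=
      (ContinuousLinearMap.apply ℝ (Fin n → ℝ)
        ((1 : ℝ), (0 : Fin n → ℝ))).hasFDerivAt.comp x hh
    have hXθ : HasFDerivAt (fun y => X (θ s y)) ((fderiv ℝ X (θ s x)).comp (A s)) x :=
      (hXd (θ s x)).hasFDerivAt.comp x (hDθ s x)
    have hfuneq : (fun y : Fin n → ℝ => K (s, y) ((1 : ℝ), (0 : Fin n → ℝ)))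
        = fun y => X (θ s y) := funext fun y => hK1 (s, y)
    rw [hfuneq] at hev
    have heq := hev.unique hXθ
    have heqv := congrArg (fun L : (Fin n → ℝ) →L[ℝ] (Fin n → ℝ) => L v) heq
    simp only [hinr_def, ContinuousLinearMap.comp_apply, ContinuousLinearMap.apply_apply,
      ContinuousLinearMap.inr_apply] at heqv ⊢
    rw [← heqv]
    exact hsymm
  refine ⟨A t, hDθ t x, ?_⟩
  set d : ℝ → ℝ := fun s => detCml n (fun i => rowCLM n i (A s)) with hd_def
  have hAdet : ∀ s, (A s).det = d s := fun s => det_eq_detCml n (A s)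
  have htr : ∀ y : Fin n → ℝ, ∑ i, fderiv ℝ X y (Pi.single i 1) i = 0 := by
    intro y
    have hpr : ∀ i : Fin n, fderiv ℝ (fun z => X z i) y
        = (ContinuousLinearMap.proj i).comp (fderiv ℝ X y) := by
      intro i
      have h5 : HasFDerivAt (fun z => X z i)
          ((ContinuousLinearMap.proj i).comp (fderiv ℝ X y)) y :=
        (ContinuousLinearMap.proj (R := ℝ) (φ := fun _ : Fin n => ℝ)
          i).hasFDerivAt.comp y (hXd y).hasFDerivAt
      exact h5.fderiv
    calc ∑ i, fderiv ℝ X y (Pi.single i 1) i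
        = ∑ i : Fin n, fderiv ℝ (fun z => X z i) y (Pi.single i 1) := by
          refine Finset.sum_congr rfl fun i _ => ?_
          rw [hpr i]
          rfl
      _ = 0 := hdiv y
  have hd0 : ∀ s : ℝ, HasDerivAt d 0 s := by
    intro s
    have hg' : ∀ i : Fin n, HasFDerivAt (fun u => rowCLM n i (A u))
        (ContinuousLinearMap.smulRight (1 : ℝ →L[ℝ] ℝ)
          (rowCLM n i ((fderiv ℝ X (θ s x)).comp (A s)))) s := fun i =>
      hasDerivAt_iff_hasFDerivAt.mp ((rowCLM n i).hasFDerivAt.comp_hasDerivAt s (hA s))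
    have hmain := HasFDerivAt.multilinear_comp (detCml n) hg'
    have hder := hmain.hasDerivAt
    have hval : (∑ i : Fin n, ((detCml n).toContinuousLinearMap (fun j => rowCLM n j (A s)) i).comp
        (ContinuousLinearMap.smulRight (1 : ℝ →L[ℝ] ℝ)
          (rowCLM n i ((fderiv ℝ X (θ s x)).comp (A s))))) 1 = 0 := by
      rw [ContinuousLinearMap.sum_apply]
      have : ∀ i : Fin n, (((detCml n).toContinuousLinearMap (fun j => rowCLM n j (A s)) i).comp
          (ContinuousLinearMap.smulRight (1 : ℝ →L[ℝ] ℝ)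
            (rowCLM n i ((fderiv ℝ X (θ s x)).comp (A s))))) 1
          = detCml n (Function.update (fun j => rowCLM n j (A s)) i
              (rowCLM n i ((fderiv ℝ X (θ s x)).comp (A s)))) := by
        intro i
        rw [detCml_update]
        simp
      rw [Finset.sum_congr rfl fun i _ => this i, sum_det_update, htr (θ s x), zero_mul]
    rw [hval] at hder
    exact hder
  have hconst : d t = d 0 :=
    is_const_of_deriv_eq_zero (fun s => (hd0 s).differentiableAt) (fun s => (hd0 s).deriv) t 0
  have hA0 : A 0 = ContinuousLinearMap.id ℝ (Fin n → ℝ) := by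
    have h1 : HasFDerivAt (fun y : Fin n → ℝ => y) (A 0) x := by
      have h2 := hDθ 0 x
      rwa [show θ 0 = fun y : Fin n → ℝ => y from funext h0] at h2
    exact h1.unique (hasFDerivAt_id x)
  have hd0val : d 0 = 1 := by
    rw [← hAdet 0, hA0]
    show LinearMap.det ((ContinuousLinearMap.id ℝ (Fin n → ℝ) : (Fin n → ℝ) →L[ℝ] (Fin n → ℝ)) :
      (Fin n → ℝ) →ₗ[ℝ] (Fin n → ℝ)) = 1
    rw [ContinuousLinearMap.coe_id, LinearMap.det_id]
  rw [hAdet t, hconst, hd0val]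

end LiouvilleAux

/-- Under the bounded-orbit assumption the orbit maps of a divergence-free field preserve
Lebesgue measure on the invariant set: if `X` is smooth with `Div(X) = 0` everywhere,
`θ` is a smooth global flow of `X`, and `Ω` is compact and forward invariant, then for
every measurable `U ⊆ Ω` and `t ≥ 0`, `θ_t(U) ⊆ Ω` and `vol(θ_t(U)) = vol(U)`. -/
theorem measure_preserving_on_invariant_set (n : ℕ)
    (X : (Fin n → ℝ) → (Fin n → ℝ))
    (hX : ContDiff ℝ (⊤ : ℕ∞) X)
    (hdiv : ∀ x : Fin n → ℝ,
      ∑ i : Fin n, fderiv ℝ (fun y => X y i) x (Pi.single i 1) = 0)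
    (θ : ℝ → (Fin n → ℝ) → (Fin n → ℝ))
    (hθ : ContDiff ℝ (⊤ : ℕ∞) (fun p : ℝ × (Fin n → ℝ) => θ p.1 p.2))
    (h0 : ∀ x, θ 0 x = x)
    (hadd : ∀ t s : ℝ, ∀ x, θ (t + s) x = θ t (θ s x))
    (hflow : ∀ t : ℝ, ∀ x, HasDerivAt (fun s => θ s x) (X (θ t x)) t)
    (Ω : Set (Fin n → ℝ)) (hΩ : IsCompact Ω)
    (hinv : ∀ x ∈ Ω, ∀ t : ℝ, 0 ≤ t → θ t x ∈ Ω) :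
    ∀ U : Set (Fin n → ℝ), MeasurableSet U → U ⊆ Ω → ∀ t : ℝ, 0 ≤ t →
      θ t '' U ⊆ Ω ∧ volume (θ t '' U) = volume U := by

  intro U hU hUΩ t ht
  have hsub : θ t '' U ⊆ Ω := by
    rintro y ⟨x, hx, rfl⟩
    exact hinv x (hUΩ hx) t ht
  refine ⟨hsub, ?_⟩
  have hinj : Function.Injective (θ t) := by
    intro a b hab
    have h1 := congrArg (θ (-t)) hab
    rw [← hadd, ← hadd, neg_add_cancel, h0, h0] at h1
    exact h1
  have hdet := LiouvilleAux.exists_fderiv_det_one n X hX hdiv θ hθ h0 hflow t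
  choose D hD hDdet using hdet
  have hint := lintegral_abs_det_fderiv_eq_addHaar_image volume hU
    (f' := D) (fun x _ => (hD x).hasFDerivWithinAt) (hinj.injOn)
  rw [← hint]
  simp only [hDdet]
  norm_num
end

section
/- Flatness of local Nash equilibria in vector potential games: let the coordinate set {1, …, n} be partitioned into blocks I₁, …, I_M, let u₁, …, u_M : ℝⁿ → ℝ be twice continuously differentiable, and suppose ∑_{m=1}^M ∑_{i ∈ I_m} ∂²u_m/∂xᵢ²(p) = 0 at a point p ∈ ℝⁿ (this holds in particular when Div(Du) = 0 everywhere). Suppose p is a local Nash equilibrium: for every player m there is a neighborhood of p such that u_m(p) ≥ u_m(q) for every q in that neighborhood that agrees with p on all coordinates outside I_m. Then ∂²u_m/∂xᵢ²(p) = 0 for every player m and every coordinate i ∈ I_m. -/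
/-!
Restricted to the line `t ↦ p + t • eᵢ`, player `player i`'s utility has a local maximum at
`t = 0`, so its second derivative there, `∂²u_(player i)/∂xᵢ²(p)`, is nonpositive. A sum of
nonpositive terms vanishes only if every term does.
-/

open Filter Topology

theorem IsLocalMax.deriv_deriv_nonpos {f : ℝ → ℝ} {a : ℝ} (h : IsLocalMax f a)
    (hc : ContinuousAt f a) : deriv (deriv f) a ≤ 0 := by
  by_contra! hpos
  -- The second-derivative test makes `a` a local minimum too, so `f` is locally constant.
  have hmin : IsLocalMin f a := isLocalMin_of_deriv_deriv_pos hpos h.deriv_eq_zero hc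
  have hconst : f =ᶠ[𝓝 a] fun _ => f a := (h.and hmin).mono fun _ hx => le_antisymm hx.1 hx.2
  refine hpos.ne' ?_
  rw [hconst.deriv.deriv_eq]
  simp

section Line

variable {E : Type*} [NormedAddCommGroup E] [NormedSpace ℝ E]

theorem hasDerivAt_comp_add_smul {F : Type*} [NormedAddCommGroup F] [NormedSpace ℝ F]
    {g : E → F} {p v : E} {t : ℝ} (hg : DifferentiableAt ℝ g (p + t • v)) :
    HasDerivAt (fun s : ℝ => g (p + s • v)) (fderiv ℝ g (p + t • v) v) t := by
  have hline : HasDerivAt (fun s : ℝ => p + s • v) v t := by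
    simpa using ((hasDerivAt_id t).smul_const v).const_add p
  exact hg.hasFDerivAt.comp_hasDerivAt t hline

theorem deriv_deriv_comp_add_smul {u : E → ℝ} {p v : E} (hu : Differentiable ℝ u)
    (hu' : DifferentiableAt ℝ (fun x => fderiv ℝ u x v) p) :
    deriv (deriv fun t : ℝ => u (p + t • v)) 0 = fderiv ℝ (fun x => fderiv ℝ u x v) p v := by
  have hderiv : deriv (fun t : ℝ => u (p + t • v)) = fun t => fderiv ℝ u (p + t • v) v :=
    funext fun t => (hasDerivAt_comp_add_smul (hu _)).deriv
  rw [hderiv]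
  simpa using (hasDerivAt_comp_add_smul (g := fun x => fderiv ℝ u x v) (p := p) (t := 0)
    (by simpa using hu')).deriv

theorem ContDiff.fderiv_fderiv_apply_nonpos_of_isLocalMax {u : E → ℝ} (hu : ContDiff ℝ 2 u)
    {p v : E} (hmax : IsLocalMax (fun t : ℝ => u (p + t • v)) 0) :
    fderiv ℝ (fun x => fderiv ℝ u x v) p v ≤ 0 := by
  have hu' : DifferentiableAt ℝ (fun x => fderiv ℝ u x v) p :=
    ((hu.fderiv_right (by norm_num)).differentiable one_ne_zero p).clm_apply
      (differentiableAt_const v)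
  rw [← deriv_deriv_comp_add_smul (hu.differentiable (by norm_num)) hu']
  exact hmax.deriv_deriv_nonpos (hu.continuous.comp (by fun_prop)).continuousAt

theorem isLocalMax_comp_add_smul {g : E → ℝ} {p v : E} {ε : ℝ} (hε : 0 < ε)
    (h : ∀ t : ℝ, dist (p + t • v) p < ε → g (p + t • v) ≤ g p) :
    IsLocalMax (fun t : ℝ => g (p + t • v)) 0 := by
  have hline : Tendsto (fun t : ℝ => p + t • v) (𝓝 0) (𝓝 p) := by
    have : Continuous fun t : ℝ => p + t • v := by fun_prop
    simpa using this.tendsto 0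
  filter_upwards [hline (Metric.ball_mem_nhds p hε)] with t ht
  simpa using h t ht

end Line

/-- Flatness of local Nash equilibria in vector potential games: the coordinates `Fin n`
are partitioned into blocks via `player : Fin n → Fin M` (player `m` controls the
coordinates `i` with `player i = m`); if the utilities `u m` are `C²` and the trace of
own-coordinate second derivatives vanishes at `p`
(`∑ᵢ ∂²u_(player i)/∂xᵢ²(p) = 0`, which holds when `Div(Du) = 0`), and `p` is a local
Nash equilibrium (no player improves by a small unilateral deviation), then
`∂²u_(player i)/∂xᵢ²(p) = 0` for every coordinate `i`. -/
theorem flat_local_nash_of_div_free (n M : ℕ)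
    (player : Fin n → Fin M) (u : Fin M → (Fin n → ℝ) → ℝ)
    (hu : ∀ m, ContDiff ℝ 2 (u m)) (p : Fin n → ℝ)
    (htrace : ∑ i : Fin n,
        fderiv ℝ (fun x => fderiv ℝ (u (player i)) x (Pi.single i 1)) p (Pi.single i 1)
      = 0)
    (hnash : ∀ m : Fin M, ∃ ε > (0 : ℝ), ∀ q : Fin n → ℝ, dist q p < ε →
      (∀ i, player i ≠ m → q i = p i) → u m q ≤ u m p) :
    ∀ i : Fin n,
      fderiv ℝ (fun x => fderiv ℝ (u (player i)) x (Pi.single i 1)) p (Pi.single i 1)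
        = 0 := by
  have hnonpos : ∀ j ∈ Finset.univ,
      fderiv ℝ (fun x => fderiv ℝ (u (player j)) x (Pi.single j 1)) p (Pi.single j 1) ≤ 0 := by
    intro j _
    obtain ⟨ε, hε, hbest⟩ := hnash (player j)
    refine (hu _).fderiv_fderiv_apply_nonpos_of_isLocalMax
      (isLocalMax_comp_add_smul hε fun t ht => hbest _ ht fun k hk => ?_)
    have hkj : k ≠ j := fun h => hk (h ▸ rfl)
    simp [Pi.single_eq_of_ne hkj]
  exact fun i => (Finset.sum_eq_zero_iff_of_nonpos hnonpos).mp htrace i (Finset.mem_univ i)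
end
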